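/- arXiv:2602.17417 — 3 statements merged into one kernel-verified Lean document; each statement's English description precedes it below -/
import Mathlib

section
/- Let D_0 be a divisor on X and let {f_1, ..., f_ℓ} be a k-basis of the Riemann–Roch space L(D_0), where ℓ = ℓ(D_0); this choice of basis defines an isomorphism L(D_0) ≅ k^ℓ. For each closed point x ∈ X fix a nonzero function g_x ∈ k(X), a uniformizer q_x at x, and functions u_{x,1}, ..., u_{x,deg(x)} ∈ Ô_{X,x} whose residue classes form a k-basis of k(x). For each 1 ≤ i ≤ ℓ write the unique expansion f_i g_x = Σ_{j≥0} (a_{x,i,j,1} u_{x,1} + ... + a_{x,i,j,deg(x)} u_{x,deg(x)}) q_x^{j − v_x(D_0) + v_x(g_x)} with all coefficients a_{x,i,j,l} ∈ k, and set a_{x,i,j} = (a_{x,i,j,1}, ..., a_{x,i,j,deg(x)}) ∈ k^{deg(x)}. Then for every effective divisor D = m_{x_1} x_1 + ... + m_{x_n} x_n with distinct closed points x_1, ..., x_n, the isomorphism L(D_0) ≅ k^ℓ identifies the subspace L(D_0 − D) with the nullspace of the ℓ × deg(D) matrix A whose i-th row is the concatenation of the vectors a_{x_1,i,0}, ..., a_{x_1,i,m_{x_1}−1},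 ..., a_{x_n,i,0}, ..., a_{x_n,i,m_{x_n}−1}. In particular ℓ(D_0 − D) = ℓ(D_0) − rank(A). -/
/-- An abstract model of a smooth, projective, geometrically integral curve over
a field `k`, recorded via its function field `K`, its type `Pt` of closed points
together with their degrees and normalized discrete valuations, and its
Riemann–Roch spaces. -/
structure AbstractCurve (k K : Type*) [Field k] [Field K] [Algebra k K] where
  /-- the closed points of the curve -/
  Pt : Type*
  /-- the degree `[k(x) : k]` of a closed point -/
  deg : Pt → ℕ
  deg_pos : ∀ x, 0 < deg x
  /-- the normalized discrete valuation at a closed point (junk value at `0`) -/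
  v : Pt → K → ℤ
  v_mul : ∀ x (f g : K), f ≠ 0 → g ≠ 0 → v x (f * g) = v x f + v x g
  v_add : ∀ x (f g : K), f ≠ 0 → g ≠ 0 → f + g ≠ 0 → min (v x f) (v x g) ≤ v x (f + g)
  v_const : ∀ x (c : k), c ≠ 0 → v x (algebraMap k K c) = 0
  v_surj : ∀ x, ∃ f : K, f ≠ 0 ∧ v x f = 1
  v_finite : ∀ f : K, f ≠ 0 → {x | v x f ≠ 0}.Finite
  /-- every principal divisor has degree zero -/
  deg_principal : ∀ f : K, f ≠ 0 → ∑ᶠ x, v x f * (deg x : ℤ) = 0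
  /-- the field of constants is exactly `k` -/
  constants : ∀ f : K, f ≠ 0 → (∀ x, 0 ≤ v x f) → ∃ c : k, f = algebraMap k K c
  /-- the Riemann–Roch space of a divisor, as a `k`-subspace of `K` -/
  RR : (Pt →₀ ℤ) → Submodule k K
  mem_RR : ∀ (D : Pt →₀ ℤ) (f : K), f ∈ RR D ↔ f = 0 ∨ ∀ x, -(D x) ≤ v x f

variable {k K : Type*} [Field k] [Field K] [Algebra k K]

/-- The degree of a divisor. -/
noncomputable def AbstractCurve.degDiv (C : AbstractCurve k K) (D : C.Pt →₀ ℤ) : ℤ :=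
  D.sum fun x n => n * (C.deg x : ℤ)

/-- The degree of the pole divisor of a function (the degree of the corresponding
map to `P¹` when the function is nonconstant). -/
noncomputable def AbstractCurve.poleDegree (C : AbstractCurve k K) (f : K) : ℤ :=
  ∑ᶠ x, max 0 (-(C.v x f)) * (C.deg x : ℤ)


/-!
Write `f = ∑ c_i f_i`. At `x_j`, the expansion of `f g_{x_j}` has coefficient vectors
`∑ c_i a_{x_j,i,r}`, and since the residues of the `u_{x_j,l}` are linearly independent, the
first `m_j` of them vanish exactly when `v_{x_j}(f) ≥ m_j - v_{x_j}(D₀)`, which is the condition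
for `f ∈ L(D₀ - D)` at `x_j`; elsewhere the condition is already that of `L(D₀)`. So `c` gives an
element of `L(D₀ - D)` iff `c A = 0`, and the dimension formula is rank–nullity for `c ↦ c A`.
-/

/-- `v_x f ≥ N`, with `v_x 0 = ∞` in place of the junk value `C.v x 0`. -/
def AbstractCurve.OrdGE (C : AbstractCurve k K) (x : C.Pt) (N : ℤ) (f : K) : Prop :=
  f = 0 ∨ N ≤ C.v x f

def truncSeries {d : ℕ} (u : Fin d → K) (q : K) (e : ℤ) (J : ℕ) :
    (ℕ → Fin d → k) →ₗ[k] K where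
  toFun w := ∑ j ∈ Finset.range J, (∑ l, algebraMap k K (w j l) * u l) * q ^ ((j : ℤ) + e)
  map_add' w w' := by
    simp only [Pi.add_apply, map_add, add_mul, Finset.sum_add_distrib]
  map_smul' c w := by
    simp only [Pi.smul_apply, smul_eq_mul, map_mul, RingHom.id_apply, Algebra.smul_def,
      Finset.mul_sum, Finset.sum_mul, mul_assoc]

section truncSeries

variable {d : ℕ} (u : Fin d → K) (q : K) (e : ℤ)

lemma truncSeries_apply (J : ℕ) (w : ℕ → Fin d → k) :
    truncSeries u q e J w =
      ∑ j ∈ Finset.range J, (∑ l, algebraMap k K (w j l) * u l) * q ^ ((j : ℤ) + e) :=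
  rfl

lemma truncSeries_succ (J : ℕ) (w : ℕ → Fin d → k) :
    truncSeries u q e (J + 1) w =
      truncSeries u q e J w + (∑ l, algebraMap k K (w J l) * u l) * q ^ ((J : ℤ) + e) :=
  Finset.sum_range_succ _ _

lemma truncSeries_eq_zero {J : ℕ} {w : ℕ → Fin d → k} (hw : ∀ j < J, w j = 0) :
    truncSeries u q e J w = 0 := by
  rw [truncSeries_apply]
  exact Finset.sum_eq_zero fun j hj => by simp [hw j (Finset.mem_range.1 hj)]

end truncSeries

namespace AbstractCurve

variable (C : AbstractCurve k K) (x : C.Pt)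

lemma v_one : C.v x 1 = 0 := by
  simpa using C.v_const x 1 one_ne_zero

lemma v_inv {f : K} (hf : f ≠ 0) : C.v x f⁻¹ = -C.v x f := by
  have h := C.v_mul x f f⁻¹ hf (inv_ne_zero hf)
  rw [mul_inv_cancel₀ hf, C.v_one] at h
  omega

lemma v_pow {f : K} (hf : f ≠ 0) (N : ℕ) : C.v x (f ^ N) = N * C.v x f := by
  induction N with
  | zero => simpa using C.v_one x
  | succ N ih =>
    rw [pow_succ, C.v_mul x _ _ (pow_ne_zero _ hf) hf, ih]
    push_cast; ring

lemma v_zpow {f : K} (hf : f ≠ 0) (e : ℤ) : C.v x (f ^ e) = e * C.v x f := by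
  cases e with
  | ofNat N => rw [Int.ofNat_eq_natCast, zpow_natCast, C.v_pow x hf]
  | negSucc N =>
    rw [zpow_negSucc, C.v_inv x (pow_ne_zero _ hf), C.v_pow x hf, Int.negSucc_eq]
    push_cast; ring

namespace OrdGE

variable {C x} {N : ℤ} {f f' : K}

lemma mono {N' : ℤ} (h : C.OrdGE x N f) (hN : N' ≤ N) : C.OrdGE x N' f :=
  h.imp_right hN.trans

lemma add (hf : C.OrdGE x N f) (hf' : C.OrdGE x N f') : C.OrdGE x N (f + f') := by
  rcases eq_or_ne f 0 with rfl | h0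
  · simpa using hf'
  rcases eq_or_ne f' 0 with rfl | h0'
  · simpa using hf
  rcases eq_or_ne (f + f') 0 with hs | hs
  · exact Or.inl hs
  · have := C.v_add x f f' h0 h0' hs
    have := hf.resolve_left h0
    have := hf'.resolve_left h0'
    exact Or.inr (by omega)

lemma smul (c : k) (hf : C.OrdGE x N f) : C.OrdGE x N (c • f) := by
  rcases eq_or_ne c 0 with rfl | hc
  · exact Or.inl (zero_smul k f)
  rcases eq_or_ne f 0 with rfl | h0
  · exact Or.inl (smul_zero c)
  · right
    rw [Algebra.smul_def, C.v_mul x _ _ ((map_ne_zero _).2 hc) h0, C.v_const x c hc, zero_add]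
    exact hf.resolve_left h0

lemma sub (hf : C.OrdGE x N f) (hf' : C.OrdGE x N f') : C.OrdGE x N (f - f') := by
  simpa [sub_eq_add_neg] using hf.add (hf'.smul (-1))

lemma sum {ι : Type*} (s : Finset ι) {F : ι → K} (h : ∀ i ∈ s, C.OrdGE x N (F i)) :
    C.OrdGE x N (∑ i ∈ s, F i) := by
  classical
  induction s using Finset.induction_on with
  | empty => exact Or.inl rfl
  | insert a s ha ih =>
    rw [Finset.sum_insert ha]
    exact (h a (s.mem_insert_self a)).add (ih fun i hi => h i (Finset.mem_insert_of_mem hi))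

end OrdGE

lemma ordGE_mul_iff {g : K} (hg : g ≠ 0) (N : ℤ) (f : K) :
    C.OrdGE x (N + C.v x g) (f * g) ↔ C.OrdGE x N f := by
  rcases eq_or_ne f 0 with rfl | hf
  · simp [OrdGE]
  · simp [OrdGE, hf, hg, C.v_mul x f g hf hg]

lemma mem_RR_iff_forall_ordGE (D : C.Pt →₀ ℤ) (f : K) :
    f ∈ C.RR D ↔ ∀ y, C.OrdGE y (-D y) f := by
  rw [C.mem_RR]
  exact forall_or_left.symm

lemma RR_mono {D D' : C.Pt →₀ ℤ} (h : D ≤ D') : C.RR D ≤ C.RR D' := fun f hf =>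
  (C.mem_RR_iff_forall_ordGE D' f).2 fun y =>
    ((C.mem_RR_iff_forall_ordGE D f).1 hf y).mono (neg_le_neg (h y))

lemma mem_RR_sub_iff {D₀ D : C.Pt →₀ ℤ} {S : Set C.Pt} (hS : ∀ y ∉ S, D y = 0) {f : K}
    (hf : f ∈ C.RR D₀) : f ∈ C.RR (D₀ - D) ↔ ∀ y ∈ S, C.OrdGE y (D y - D₀ y) f := by
  rw [mem_RR_iff_forall_ordGE] at hf ⊢
  refine ⟨fun h y _ => by simpa using h y, fun h y => ?_⟩
  by_cases hy : y ∈ S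
  · simpa using h y hy
  · simpa [hS y hy] using hf y

/-- `f = ∑_{j ≥ 0} (∑_l w_{j,l} u_l) q^(j+e)` in the completion at `x`, stated through the
truncations of the series. -/
def HasExpansion {d : ℕ} (u : Fin d → K) (q : K) (e : ℤ) (w : ℕ → Fin d → k) (f : K) : Prop :=
  ∀ J : ℕ, C.OrdGE x (J + e) (f - truncSeries u q e J w)

variable {C x} {d : ℕ} {u : Fin d → K} {q : K} {e : ℤ}

lemma HasExpansion.sum_smul {ι : Type*} (s : Finset ι) {w : ι → ℕ → Fin d → k} {f : ι → K}
    (h : ∀ i ∈ s, C.HasExpansion x u q e (w i) (f i)) (c : ι → k) :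
    C.HasExpansion x u q e (∑ i ∈ s, c i • w i) (∑ i ∈ s, c i • f i) := fun J => by
  rw [map_sum]
  simp only [map_smul, ← Finset.sum_sub_distrib, ← smul_sub]
  exact OrdGE.sum s fun i hi => (h i hi J).smul (c i)

lemma HasExpansion.ordGE_iff {w : ℕ → Fin d → k} {f : K} (hf : C.HasExpansion x u q e w f)
    (hq : q ≠ 0) (hvq : C.v x q = 1)
    (hu : ∀ c : Fin d → k, C.OrdGE x 1 (∑ l, algebraMap k K (c l) * u l) → c = 0) (M : ℕ) :
    C.OrdGE x (M + e) f ↔ ∀ j < M, w j = 0 := by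
  refine ⟨fun hM j => ?_, fun hw => by simpa [truncSeries_eq_zero u q e hw] using hf M⟩
  induction j using Nat.strong_induction_on with
  | _ j ih =>
    intro hj
    have hprev : truncSeries u q e j w = 0 :=
      truncSeries_eq_zero u q e fun i hi => ih i hi (hi.trans hj)
    -- the `j`-th term then has valuation `≥ j + 1 + e`, so its coefficient vector `w j` lies in
    -- the maximal ideal
    have hlead := (hM.mono (N' := (j + 1 : ℕ) + e) (by omega)).sub (hf (j + 1))
    rw [truncSeries_succ, hprev, zero_add, sub_sub_cancel,
      show ((j + 1 : ℕ) : ℤ) + e = 1 + C.v x (q ^ ((j : ℤ) + e)) by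
        rw [C.v_zpow x hq, hvq]; push_cast; ring,
      ordGE_mul_iff C x (zpow_ne_zero _ hq)] at hlead
    exact hu (w j) hlead

lemma ordGE_sum_smul_iff {ι : Type*} [Fintype ι] {f : ι → K} {g : K} {N₀ : ℤ}
    {a : ι → ℕ → Fin d → k} (hf : ∀ i, C.HasExpansion x u q (C.v x g - N₀) (a i) (f i * g))
    (hg : g ≠ 0) (hq : q ≠ 0) (hvq : C.v x q = 1)
    (hu : ∀ c : Fin d → k, C.OrdGE x 1 (∑ l, algebraMap k K (c l) * u l) → c = 0)
    (c : ι → k) (M : ℕ) :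
    C.OrdGE x (M - N₀) (∑ i, c i • f i) ↔ ∀ j < M, ∀ l, ∑ i, c i * a i j l = 0 := by
  have hexp : C.HasExpansion x u q (C.v x g - N₀) (∑ i, c i • a i) ((∑ i, c i • f i) * g) := by
    simpa only [Finset.sum_mul, smul_mul_assoc] using
      HasExpansion.sum_smul Finset.univ (fun i _ => hf i) c
  rw [← C.ordGE_mul_iff x hg, show (M : ℤ) - N₀ + C.v x g = M + (C.v x g - N₀) by ring,
    hexp.ordGE_iff hq hvq hu]
  simp only [funext_iff, Finset.sum_apply, Pi.smul_apply, smul_eq_mul, Pi.zero_apply]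

end AbstractCurve


lemma Submodule.finrank_comap_of_injective {R V W : Type*} [Ring R] [AddCommGroup V]
    [AddCommGroup W] [Module R V] [Module R W] (ψ : V →ₗ[R] W) (hψ : Function.Injective ψ)
    {P : Submodule R W} (hP : P ≤ LinearMap.range ψ) :
    Module.finrank R (P.comap ψ) = Module.finrank R P := by
  conv_rhs => rw [← Submodule.map_comap_eq_of_le hP]
  exact (Submodule.equivMapOfInjective ψ hψ _).finrank_eq

lemma Matrix.finrank_ker_vecMulLinear {R m n : Type*} [Field R] [Fintype m] [Fintype n]
    (A : Matrix m n R) :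
    Module.finrank R (LinearMap.ker A.vecMulLinear) = Fintype.card m - A.rank := by
  have h : A.transpose.rank + _ = _ :=
    LinearMap.finrank_range_add_finrank_ker A.transpose.mulVecLin
  rw [Matrix.rank_transpose, Matrix.mulVecLin_transpose, Module.finrank_fintype_fun_eq_card] at h
  omega

lemma Module.Basis.finrank_eq_card_sub_rank_of_mem_iff_vecMul_eq_zero {R V ι σ : Type*}
    [Field R] [AddCommGroup V] [Module R V] [Fintype ι] [Fintype σ] {P P' : Submodule R V}
    (b : Module.Basis ι R P) (hP' : P' ≤ P) (A : Matrix ι σ R)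
    (hA : ∀ c : ι → R, ∑ i, c i • (b i : V) ∈ P' ↔ Matrix.vecMul c A = 0) :
    Module.finrank R P' = Fintype.card ι - A.rank := by
  set ψ : (ι → R) →ₗ[R] V := P.subtype ∘ₗ b.equivFun.symm.toLinearMap
  have hker : P'.comap ψ = LinearMap.ker A.vecMulLinear :=
    Submodule.ext fun c => by simpa [ψ, Module.Basis.equivFun_symm_apply] using hA c
  have hrange : P' ≤ LinearMap.range ψ := by
    rwa [LinearMap.range_comp, LinearEquiv.range, Submodule.map_top, Submodule.range_subtype]
  rw [← Submodule.finrank_comap_of_injective ψ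
    (P.injective_subtype.comp b.equivFun.symm.injective) hrange, hker,
    Matrix.finrank_ker_vecMulLinear]

theorem statement0_general (C : AbstractCurve k K)
    (D₀ : C.Pt →₀ ℤ) (L : ℕ)
    (b : Module.Basis (Fin L) k (C.RR D₀))
    (g : C.Pt → K) (hg : ∀ x, g x ≠ 0)
    (q : C.Pt → K) (hq : ∀ x, q x ≠ 0 ∧ C.v x (q x) = 1)
    (u : (x : C.Pt) → Fin (C.deg x) → K)
    (hu_indep : ∀ x (c : Fin (C.deg x) → k),
      ((∑ l, algebraMap k K (c l) * u x l) = 0 ∨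
        0 < C.v x (∑ l, algebraMap k K (c l) * u x l)) →
      ∀ l, c l = 0)
    (a : (x : C.Pt) → Fin L → ℕ → Fin (C.deg x) → k)
    (ha : ∀ (x : C.Pt) (i : Fin L) (J : ℕ),
      ((b i : K) * g x - ∑ j ∈ Finset.range J,
          (∑ l, algebraMap k K (a x i j l) * u x l) *
            q x ^ ((j : ℤ) - D₀ x + C.v x (g x)) = 0) ∨
        (J : ℤ) - D₀ x + C.v x (g x) ≤
          C.v x ((b i : K) * g x - ∑ j ∈ Finset.range J,
            (∑ l, algebraMap k K (a x i j l) * u x l) *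
              q x ^ ((j : ℤ) - D₀ x + C.v x (g x))))
    (n : ℕ) (x : Fin n → C.Pt)
    (m : Fin n → ℕ)
    (D : C.Pt →₀ ℤ) (hD : ∀ j, D (x j) = (m j : ℤ))
    (hD0 : ∀ y : C.Pt, (∀ j, y ≠ x j) → D y = 0)
    (A : Matrix (Fin L) ((j : Fin n) × (Fin (m j) × Fin (C.deg (x j)))) k)
    (hA : ∀ i jrl, A i jrl = a (x jrl.1) i (jrl.2.1 : ℕ) jrl.2.2) :
    (∀ c : Fin L → k,
      (∑ i, algebraMap k K (c i) * (b i : K)) ∈ C.RR (D₀ - D) ↔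
        Matrix.vecMul c A = 0) ∧
      Module.finrank k (C.RR (D₀ - D)) = L - A.rank := by
  have hexp : ∀ y i, C.HasExpansion y (u y) (q y) (C.v y (g y) - D₀ y) (a y i) (b i * g y) :=
    fun y i J => by
      have he : ∀ t : ℤ, t - D₀ y + C.v y (g y) = t + (C.v y (g y) - D₀ y) := fun t => by ring
      simpa only [AbstractCurve.OrdGE, truncSeries_apply, he] using ha y i J
  have hsupp : ∀ y ∉ Set.range x, D y = 0 := fun y hy => hD0 y fun j h => hy ⟨j, h.symm⟩
  have hD_nonneg : 0 ≤ D := fun y => by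
    by_cases hy : y ∈ Set.range x
    · obtain ⟨j, rfl⟩ := hy
      simp [hD]
    · simp [hsupp y hy]
  have hvecMul : ∀ c, Matrix.vecMul c A = 0 ↔
      ∀ j, ∀ r < m j, ∀ l, ∑ i, c i * a (x j) i r l = 0 := fun c => by
    simp only [funext_iff, Matrix.vecMul, dotProduct, hA, Sigma.forall, Prod.forall,
      Pi.zero_apply]
    exact forall_congr' fun j => Fin.forall_iff
  have hmem : ∀ c : Fin L → k, ∑ i, c i • (b i : K) ∈ C.RR (D₀ - D) ↔ Matrix.vecMul c A = 0 :=
    fun c => by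
      rw [C.mem_RR_sub_iff hsupp (Submodule.sum_mem _ fun i _ => Submodule.smul_mem _ _ (b i).2),
        Set.forall_mem_range, hvecMul]
      refine forall_congr' fun j => ?_
      rw [hD]
      exact AbstractCurve.ordGE_sum_smul_iff (hexp (x j)) (hg _) (hq _).1 (hq _).2
        (fun c h => funext (hu_indep (x j) c h)) c (m j)
  refine ⟨fun c => by simpa only [Algebra.smul_def] using hmem c, ?_⟩
  rw [b.finrank_eq_card_sub_rank_of_mem_iff_vecMul_eq_zero
    (C.RR_mono (sub_le_self D₀ hD_nonneg)) A hmem, Fintype.card_fin]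

/-- **Theorem 3.1 of the paper.** Let `D₀` be a divisor on `X`
and let `f_1, ..., f_L` be a `k`-basis of `L(D₀)`, where `L = ℓ(D₀)` (the basis
`b` identifies `L(D₀)` with `k^L`). For each closed point `x` fix a nonzero
function `g x ∈ k(X)`, a uniformizer `q x` at `x`, and functions
`u x 1, ..., u x (deg x)`, integral at `x`, whose residue classes form a
`k`-basis of the residue field `k(x)` (expressed valuatively by `hu_indep` and
`hu_span`). For each `i` write the unique expansion
`f_i · g x = Σ_{j ≥ 0} (Σ_l a x i j l · u x l) · (q x)^(j − v_x(D₀) + v_x(g x))`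
with all coefficients `a x i j l ∈ k` (expressed by the condition `ha` that
every truncation of the series approximates `f_i · g x` to the stated order).

Then for every effective divisor `D = m₁ x₁ + ... + m_n x_n` with distinct
closed points `x j` and multiplicities `m j ≥ 1`, the identification of
`L(D₀)` with `k^L` identifies the subspace `L(D₀ − D)` with the nullspace of
the `L × deg D` matrix `A` whose `i`-th row is the concatenation of the vectors
`a (x j) i r` for `j = 1, ..., n` and `r = 0, ..., m j − 1`. In particular
`ℓ(D₀ − D) = ℓ(D₀) − rank A`. -/
theorem statement0 (C : AbstractCurve k K)
    (D₀ : C.Pt →₀ ℤ) (L : ℕ) (hL : L = Module.finrank k (C.RR D₀))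
    (b : Module.Basis (Fin L) k (C.RR D₀))
    (g : C.Pt → K) (hg : ∀ x, g x ≠ 0)
    (q : C.Pt → K) (hq : ∀ x, q x ≠ 0 ∧ C.v x (q x) = 1)
    (u : (x : C.Pt) → Fin (C.deg x) → K)
    (hu_int : ∀ x l, u x l ≠ 0 ∧ 0 ≤ C.v x (u x l))
    (hu_indep : ∀ x (c : Fin (C.deg x) → k),
      ((∑ l, algebraMap k K (c l) * u x l) = 0 ∨
        0 < C.v x (∑ l, algebraMap k K (c l) * u x l)) →
      ∀ l, c l = 0)
    (hu_span : ∀ x (w : K), w ≠ 0 → 0 ≤ C.v x w →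
      ∃ c : Fin (C.deg x) → k,
        (w - ∑ l, algebraMap k K (c l) * u x l) = 0 ∨
          0 < C.v x (w - ∑ l, algebraMap k K (c l) * u x l))
    (a : (x : C.Pt) → Fin L → ℕ → Fin (C.deg x) → k)
    (ha : ∀ (x : C.Pt) (i : Fin L) (J : ℕ),
      ((b i : K) * g x - ∑ j ∈ Finset.range J,
          (∑ l, algebraMap k K (a x i j l) * u x l) *
            q x ^ ((j : ℤ) - D₀ x + C.v x (g x)) = 0) ∨
        (J : ℤ) - D₀ x + C.v x (g x) ≤
          C.v x ((b i : K) * g x - ∑ j ∈ Finset.range J,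
            (∑ l, algebraMap k K (a x i j l) * u x l) *
              q x ^ ((j : ℤ) - D₀ x + C.v x (g x))))
    (n : ℕ) (x : Fin n → C.Pt) (hx : Function.Injective x)
    (m : Fin n → ℕ) (hm : ∀ j, 0 < m j)
    (D : C.Pt →₀ ℤ) (hD : ∀ j, D (x j) = (m j : ℤ))
    (hD0 : ∀ y : C.Pt, (∀ j, y ≠ x j) → D y = 0)
    (A : Matrix (Fin L) ((j : Fin n) × (Fin (m j) × Fin (C.deg (x j)))) k)
    (hA : ∀ i jrl, A i jrl = a (x jrl.1) i (jrl.2.1 : ℕ) jrl.2.2) :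
    (∀ c : Fin L → k,
      (∑ i, algebraMap k K (c i) * (b i : K)) ∈ C.RR (D₀ - D) ↔
        Matrix.vecMul c A = 0) ∧
      Module.finrank k (C.RR (D₀ - D)) = L - A.rank :=
  statement0_general C D₀ L b g hg q hq u hu_indep a ha n x m D hD hD0 A hA
end

section
/- Let f ∈ k(X)^× be a nonzero function. Let g ∈ k[t] be the denominator of f with respect to O_0, that is, the minimal nonzero polynomial g ∈ k[t] such that fg ∈ O_0, and let h ∈ k[t] be a generator of the ideal k[t] ∩ f g O_0. Let D_g and D_h be the zero divisors of g and h on P^1 respectively. Then {π(x) : x ∈ Supp(div(f)), π(x) ≠ ∞} = Supp(D_g) ∪ Supp(D_h). In particular, div(f) is supported on the set {x ∈ X : π(x) ∈ Supp(D_g) ∪ Supp(D_h) ∪ {∞}}. -/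
/-!
Put `u = f g ∈ O₀`. At a finite point `x` (one with `v x t ≥ 0`) every polynomial has nonnegative
valuation, so `{r ∈ k[t] | v x r > 0}` is a prime ideal `(p)` and `x` lies over the single finite
point `p`; at an infinite point every nonconstant polynomial has negative valuation. At a finite
point, `v x f < 0` forces `v x g > 0`, and `v x f > 0` forces `v x h > 0` because `h ∈ u O₀`.
Conversely, if `p ∣ g` then minimality of `g` gives `f (g / p) ∉ O₀`, i.e. a pole of `f` over `p`.
If `p ∣ h` then minimality of `h` gives `h / p ∉ u O₀`, i.e. a finite point over `p` where `u`
vanishes; there `f` has a zero or a pole, or else `p ∣ g` and we are in the previous case.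
-/

open Polynomial

structure IsIntAddValuation {K : Type*} [Field K] (v : K → ℤ) : Prop where
  map_mul : ∀ a b, a ≠ 0 → b ≠ 0 → v (a * b) = v a + v b
  min_le_map_add : ∀ a b, a ≠ 0 → b ≠ 0 → a + b ≠ 0 → min (v a) (v b) ≤ v (a + b)

namespace IsIntAddValuation

variable {K : Type*} [Field K] {v : K → ℤ}

theorem map_one (hv : IsIntAddValuation v) : v 1 = 0 := by
  have := hv.map_mul 1 1 one_ne_zero one_ne_zero
  rw [mul_one] at this
  omega

theorem map_div (hv : IsIntAddValuation v) {a b : K} (ha : a ≠ 0) (hb : b ≠ 0) :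
    v (a / b) = v a - v b := by
  have := hv.map_mul (a / b) b (div_ne_zero ha hb) hb
  rw [div_mul_cancel₀ a hb] at this
  omega

end IsIntAddValuation

theorem isUnit_of_mul_dvd_self {M : Type*} [CommMonoidWithZero M] [IsCancelMulZero M] {a b : M}
    (hb : b ≠ 0) (h : a * b ∣ b) : IsUnit a :=
  isUnit_of_dvd_one ((mul_dvd_mul_iff_right hb).1 (by rwa [one_mul]))

section Center

variable {R K : Type*} [CommRing R] [Field K] [Algebra R K] {v : K → ℤ}

local notation "φ" => algebraMap R K

def centerIdeal (hv : IsIntAddValuation v) (hR : ∀ r : R, 0 ≤ v (φ r)) : Ideal R where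
  carrier := {r | φ r = 0 ∨ 0 < v (φ r)}
  zero_mem' := Or.inl (map_zero _)
  add_mem' := by
    intro a b ha hb
    simp only [Set.mem_ofPred_eq, map_add] at *
    by_cases ha0 : φ a = 0
    · rwa [ha0, zero_add]
    by_cases hb0 : φ b = 0
    · rwa [hb0, add_zero]
    refine or_iff_not_imp_left.2 fun hab => ?_
    have := hv.min_le_map_add _ _ ha0 hb0 hab
    have := ha.resolve_left ha0
    have := hb.resolve_left hb0
    omega
  smul_mem' := by
    intro c a ha
    simp only [Set.mem_ofPred_eq, smul_eq_mul, map_mul] at *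
    by_cases hc0 : φ c = 0
    · simp [hc0]
    by_cases ha0 : φ a = 0
    · simp [ha0]
    rw [hv.map_mul _ _ hc0 ha0]
    have := hR c
    have := ha.resolve_left ha0
    omega

theorem mem_centerIdeal {hv : IsIntAddValuation v} {hR : ∀ r : R, 0 ≤ v (φ r)} {r : R} :
    r ∈ centerIdeal hv hR ↔ φ r = 0 ∨ 0 < v (φ r) :=
  Iff.rfl

theorem centerIdeal_isPrime (hv : IsIntAddValuation v) (hR : ∀ r : R, 0 ≤ v (φ r)) :
    (centerIdeal hv hR).IsPrime := by
  refine ⟨?_, fun {a b} hab => ?_⟩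
  · rw [Ne, Ideal.eq_top_iff_one, mem_centerIdeal, map_one, hv.map_one]
    simp
  simp only [mem_centerIdeal, map_mul, mul_eq_zero] at *
  by_cases ha0 : φ a = 0
  · exact Or.inl (Or.inl ha0)
  by_cases hb0 : φ b = 0
  · exact Or.inr (Or.inl hb0)
  have hab := hab.resolve_left (by simp [ha0, hb0])
  rw [hv.map_mul _ _ ha0 hb0] at hab
  have := hR a
  have := hR b
  simp only [ha0, hb0, false_or]
  omega

theorem dvd_iff_val_pos [IsPrincipalIdealRing R] (hv : IsIntAddValuation v)
    (hR : ∀ r : R, 0 ≤ v (φ r)) (hinj : Function.Injective φ) {p r : R} (hp : Irreducible p)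
    (hvp : 0 < v (φ p)) (hr : r ≠ 0) : p ∣ r ↔ 0 < v (φ r) := by
  have hspan : Ideal.span {p} = centerIdeal hv hR :=
    (PrincipalIdealRing.isMaximal_of_irreducible hp).eq_of_le (centerIdeal_isPrime hv hR).ne_top
      ((Ideal.span_singleton_le_iff_mem _).2 (Or.inr hvp))
  rw [← Ideal.mem_span_singleton, hspan, mem_centerIdeal,
    or_iff_right ((map_ne_zero_iff _ hinj).2 hr)]

theorem exists_prime_dvd_of_val_pos [IsPrincipalIdealRing R] (hv : IsIntAddValuation v)
    (hR : ∀ r : R, 0 ≤ v (φ r)) (hinj : Function.Injective φ) {r : R} (hr : r ≠ 0)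
    (hvr : 0 < v (φ r)) : ∃ p, Prime p ∧ p ∣ r ∧ 0 < v (φ p) := by
  have := centerIdeal_isPrime hv hR
  have hrP : r ∈ centerIdeal hv hR := Or.inr hvr
  have hP : centerIdeal hv hR ≠ ⊥ := fun h => hr (by rwa [h, Ideal.mem_bot] at hrP)
  have hprime := Submodule.IsPrincipal.prime_generator_of_isPrime _ hP
  refine ⟨_, hprime, (Submodule.IsPrincipal.mem_iff_generator_dvd _).1 hrP, ?_⟩
  exact (mem_centerIdeal.1 (Submodule.IsPrincipal.generator_mem _)).resolve_left
    ((map_ne_zero_iff _ hinj).2 hprime.ne_zero)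

end Center

theorem val_neg_of_degree_pos {k K : Type*} [Field k] [Field K] [Algebra k[X] K] {v : K → ℤ}
    (hv : IsIntAddValuation v) (hinj : Function.Injective (algebraMap k[X] K))
    (hC : ∀ c : k, c ≠ 0 → v (algebraMap k[X] K (C c)) = 0)
    (hX : v (algebraMap k[X] K X) < 0) {p : k[X]} (hp : 0 < p.degree) :
    v (algebraMap k[X] K p) < 0 := by
  have hφ : ∀ q : k[X], q ≠ 0 → algebraMap k[X] K q ≠ 0 := fun q => (map_ne_zero_iff _ hinj).2
  refine degree_pos_induction_on p hp (fun {a} ha => ?_) (fun {p} hp ih => ?_)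
    (fun {p a} hp ih => ?_)
  · rw [map_mul, hv.map_mul _ _ (hφ _ (C_ne_zero.2 ha)) (hφ _ X_ne_zero), hC a ha]
    omega
  · rw [map_mul, hv.map_mul _ _ (hφ _ (ne_zero_of_degree_gt hp)) (hφ _ X_ne_zero)]
    omega
  by_cases ha : a = 0
  · simpa [ha] using ih
  -- `p = (p + C a) + C (-a)` with `v (C (-a)) = 0`, so `v (p + C a) ≥ 0` would force `v p ≥ 0`.
  by_contra! hnonneg
  have hsum : p + C a ≠ 0 := ne_zero_of_degree_gt (hp.trans_eq (degree_add_C hp).symm)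
  have := hv.min_le_map_add _ _ (hφ _ hsum) (hφ _ (C_ne_zero.2 (neg_ne_zero.2 ha)))
    (by rw [← map_add, C_neg, add_neg_cancel_right]; exact hφ _ (ne_zero_of_degree_gt hp))
  rw [← map_add, C_neg, add_neg_cancel_right, ← C_neg, hC _ (neg_ne_zero.2 ha)] at this
  omega

section Denominator

variable {R K Pt : Type*} [CommRing R] [Field K] [Algebra R K] {v : Pt → K → ℤ} {S : Set Pt}
  {O : Subalgebra R K} {f : K} {g h p : R}

local notation "φ" => algebraMap R K

structure IsMinimalDenominator (O : Subalgebra R K) (f : K) (g : R) : Prop where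
  ne_zero : g ≠ 0
  mul_mem : f * φ g ∈ O
  dvd : ∀ g', g' ≠ 0 → f * φ g' ∈ O → g ∣ g'

structure IsGeneratorOfInterMul (O : Subalgebra R K) (u : K) (h : R) : Prop where
  ne_zero : h ≠ 0
  mem : ∃ a ∈ O, φ h = u * a
  dvd : ∀ h', (∃ a ∈ O, φ h' = u * a) → h ∣ h'

theorem val_algebraMap_nonneg (hO : ∀ a, a ∈ O ↔ ∀ x ∈ S, 0 ≤ v x a) {x : Pt} (hx : x ∈ S)
    (r : R) : 0 ≤ v x (φ r) :=
  (hO _).1 (O.algebraMap_mem r) x hx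

theorem exists_val_neg_of_dvd_denominator [IsDomain R] (hv : ∀ x, IsIntAddValuation (v x))
    (hinj : Function.Injective φ) (hO : ∀ a, a ∈ O ↔ ∀ x ∈ S, 0 ≤ v x a) (hf : f ≠ 0)
    (hg : IsMinimalDenominator O f g) (hp : Irreducible p) (hpg : p ∣ g) :
    ∃ x ∈ S, v x f < 0 ∧ 0 < v x (φ p) := by
  obtain ⟨g', rfl⟩ := hpg
  have hg' : g' ≠ 0 := right_ne_zero_of_mul hg.ne_zero
  have hφ : ∀ q : R, q ≠ 0 → φ q ≠ 0 := fun q => (map_ne_zero_iff _ hinj).2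
  have hnot : f * φ g' ∉ O := fun hmem =>
    hp.not_isUnit (isUnit_of_mul_dvd_self hg' (hg.dvd g' hg' hmem))
  obtain ⟨x, hx, hneg⟩ : ∃ x ∈ S, v x (f * φ g') < 0 := by
    simpa [hO] using hnot
  have hmem := (hO _).1 hg.mul_mem x hx
  rw [map_mul, ← mul_assoc, (hv x).map_mul _ _ (mul_ne_zero hf (hφ p hp.ne_zero)) (hφ g' hg'),
    (hv x).map_mul _ _ hf (hφ p hp.ne_zero)] at hmem
  rw [(hv x).map_mul _ _ hf (hφ g' hg')] at hneg
  have := val_algebraMap_nonneg hO hx g'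
  exact ⟨x, hx, by omega, by omega⟩

theorem val_pos_or_val_pos_of_val_ne_zero (hv : ∀ x, IsIntAddValuation (v x))
    (hinj : Function.Injective φ) (hO : ∀ a, a ∈ O ↔ ∀ x ∈ S, 0 ≤ v x a) (hf : f ≠ 0)
    (hg : IsMinimalDenominator O f g) (hh : IsGeneratorOfInterMul O (f * φ g) h) {x : Pt}
    (hx : x ∈ S) (hvf : v x f ≠ 0) : 0 < v x (φ g) ∨ 0 < v x (φ h) := by
  obtain ⟨a, haO, ha⟩ := hh.mem
  have hφ : ∀ q : R, q ≠ 0 → φ q ≠ 0 := fun q => (map_ne_zero_iff _ hinj).2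
  have hφg := hφ g hg.ne_zero
  have ha0 : a ≠ 0 := by
    rintro rfl
    exact hφ h hh.ne_zero (by simpa using ha)
  have hvh : v x (φ h) = v x f + v x (φ g) + v x a := by
    rw [ha, (hv x).map_mul _ _ (mul_ne_zero hf hφg) ha0, (hv x).map_mul _ _ hf hφg]
  have hvu := (hO _).1 hg.mul_mem x hx
  rw [(hv x).map_mul _ _ hf hφg] at hvu
  have := (hO _).1 haO x hx
  have := val_algebraMap_nonneg hO hx g
  omega

theorem exists_val_ne_zero_of_dvd_generator [IsDomain R] [IsPrincipalIdealRing R]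
    (hv : ∀ x, IsIntAddValuation (v x)) (hinj : Function.Injective φ)
    (hO : ∀ a, a ∈ O ↔ ∀ x ∈ S, 0 ≤ v x a) (hf : f ≠ 0) (hg : IsMinimalDenominator O f g)
    (hh : IsGeneratorOfInterMul O (f * φ g) h) (hp : Irreducible p) (hph : p ∣ h) :
    ∃ x ∈ S, v x f ≠ 0 ∧ 0 < v x (φ p) := by
  obtain ⟨a, haO, ha⟩ := hh.mem
  obtain ⟨h', rfl⟩ := hph
  have hφ : ∀ q : R, q ≠ 0 → φ q ≠ 0 := fun q => (map_ne_zero_iff _ hinj).2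
  have hh' : h' ≠ 0 := right_ne_zero_of_mul hh.ne_zero
  have hφp := hφ p hp.ne_zero
  have ha0 : a ≠ 0 := by
    rintro rfl
    exact hφ _ hh.ne_zero (by simpa using ha)
  -- Otherwise `a / p ∈ O`, so `h'` lies in `R ∩ f g O`, yet `h = p h'` does not divide it.
  obtain ⟨x, hx, hvp, hvu⟩ : ∃ x ∈ S, 0 < v x (φ p) ∧ 0 < v x (f * φ g) := by
    by_contra! hcon
    have hmem : a / φ p ∈ O := (hO _).2 fun x hx => by
      have hva : v x (φ p) + v x (φ h') = v x (f * φ g) + v x a := by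
        rw [← (hv x).map_mul _ _ hφp (hφ h' hh'), ← (hv x).map_mul _ _ (mul_ne_zero hf
          (hφ g hg.ne_zero)) ha0, ← map_mul, ha]
      rw [(hv x).map_div ha0 hφp]
      have := (hO _).1 hg.mul_mem x hx
      have := (hO _).1 haO x hx
      have := val_algebraMap_nonneg hO hx p
      have := val_algebraMap_nonneg hO hx h'
      have := hcon x hx
      omega
    refine hp.not_isUnit (isUnit_of_mul_dvd_self hh' (hh.dvd h' ⟨a / φ p, hmem, ?_⟩))
    rw [← mul_div_assoc, ← ha, map_mul, mul_div_cancel_left₀ _ hφp]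
  by_cases hvf : v x f = 0
  · have hvg : 0 < v x (φ g) := by
      rw [(hv x).map_mul _ _ hf (hφ g hg.ne_zero)] at hvu
      omega
    have hpg := (dvd_iff_val_pos (hv x) (val_algebraMap_nonneg hO hx) hinj hp hvp
      hg.ne_zero).2 hvg
    obtain ⟨y, hy, hvy, hvpy⟩ := exists_val_neg_of_dvd_denominator hv hinj hO hf hg hp hpg
    exact ⟨y, hy, hvy.ne, hvpy⟩
  · exact ⟨x, hx, hvf, hvp⟩

theorem exists_val_ne_zero_and_val_pos_iff_dvd_or_dvd [IsDomain R] [IsPrincipalIdealRing R]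
    (hv : ∀ x, IsIntAddValuation (v x)) (hinj : Function.Injective φ)
    (hO : ∀ a, a ∈ O ↔ ∀ x ∈ S, 0 ≤ v x a) (hf : f ≠ 0) (hg : IsMinimalDenominator O f g)
    (hh : IsGeneratorOfInterMul O (f * φ g) h) (hp : Irreducible p) :
    (∃ x ∈ S, v x f ≠ 0 ∧ 0 < v x (φ p)) ↔ p ∣ g ∨ p ∣ h := by
  refine ⟨fun ⟨x, hx, hvf, hvp⟩ => ?_, fun hpgh => ?_⟩
  · have hdvd {r : R} :=
      dvd_iff_val_pos (hv x) (val_algebraMap_nonneg hO hx) hinj hp hvp (r := r)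
    rcases val_pos_or_val_pos_of_val_ne_zero hv hinj hO hf hg hh hx hvf with hvg | hvh
    · exact Or.inl ((hdvd hg.ne_zero).2 hvg)
    · exact Or.inr ((hdvd hh.ne_zero).2 hvh)
  rcases hpgh with hpg | hph
  · obtain ⟨x, hx, hvf, hvp⟩ := exists_val_neg_of_dvd_denominator hv hinj hO hf hg hp hpg
    exact ⟨x, hx, hvf.ne, hvp⟩
  · exact exists_val_ne_zero_of_dvd_generator hv hinj hO hf hg hh hp hph

end Denominator

/-- Closed points of `X` are modelled by a type `Pt` of normalized valuations `v x` on `K = k(X)`;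
a finite point of `P¹` is an irreducible `p ∈ k[t]`, the point `x` lies over it iff `v x p > 0`,
and `π x = ∞` iff `v x t < 0`. -/
theorem statement6_general {k K : Type*} [Field k] [Field K] [Algebra (Polynomial k) K]
    (halg : Function.Injective (algebraMap (Polynomial k) K))
    (Pt : Type*) (v : Pt → K → ℤ)
    (hv_mul : ∀ x (a b : K), a ≠ 0 → b ≠ 0 → v x (a * b) = v x a + v x b)
    (hv_add : ∀ x (a b : K), a ≠ 0 → b ≠ 0 → a + b ≠ 0 → min (v x a) (v x b) ≤ v x (a + b))
    (hv_const : ∀ x (c : k), c ≠ 0 → v x (algebraMap (Polynomial k) K (Polynomial.C c)) = 0)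
    (hO0 : ∀ a : K, a ∈ integralClosure (Polynomial k) K ↔
      ∀ x, 0 ≤ v x (algebraMap (Polynomial k) K Polynomial.X) → 0 ≤ v x a)
    (f : K) (hf : f ≠ 0)
    (g : Polynomial k) (hg : g ≠ 0)
    (hfg : f * algebraMap (Polynomial k) K g ∈ integralClosure (Polynomial k) K)
    (hg_min : ∀ g' : Polynomial k, g' ≠ 0 →
      f * algebraMap (Polynomial k) K g' ∈ integralClosure (Polynomial k) K → g ∣ g')
    (h : Polynomial k) (hh : h ≠ 0)
    (hh_mem : ∃ a ∈ integralClosure (Polynomial k) K,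
      algebraMap (Polynomial k) K h = f * algebraMap (Polynomial k) K g * a)
    (hh_gen : ∀ h' : Polynomial k,
      (∃ a ∈ integralClosure (Polynomial k) K,
        algebraMap (Polynomial k) K h' = f * algebraMap (Polynomial k) K g * a) → h ∣ h') :
    ({p : Polynomial k | Irreducible p ∧
        ∃ x, v x f ≠ 0 ∧ 0 < v x (algebraMap (Polynomial k) K p)} =
      {p : Polynomial k | Irreducible p ∧ p ∣ g} ∪
        {p : Polynomial k | Irreducible p ∧ p ∣ h}) ∧
      ∀ x, v x f ≠ 0 →
        v x (algebraMap (Polynomial k) K Polynomial.X) < 0 ∨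
          ∃ p : Polynomial k, Irreducible p ∧ (p ∣ g ∨ p ∣ h) ∧
            0 < v x (algebraMap (Polynomial k) K p) := by
  have hv x : IsIntAddValuation (v x) := ⟨hv_mul x, hv_add x⟩
  have hg' : IsMinimalDenominator _ f g := ⟨hg, hfg, hg_min⟩
  have hh' : IsGeneratorOfInterMul _ _ h := ⟨hh, hh_mem, hh_gen⟩
  have hfinite x p (hp : Irreducible p) (hvp : 0 < v x (algebraMap k[X] K p)) :
      0 ≤ v x (algebraMap k[X] K X) :=
    not_lt.1 fun hX => (val_neg_of_degree_pos (hv x) halg (hv_const x) hX hp.degree_pos).not_gt hvp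
  refine ⟨Set.ext fun p => ?_, fun x hvf => ?_⟩
  · simp only [Set.mem_ofPred_eq, Set.mem_union, ← and_or_left]
    refine and_congr_right fun hp => ?_
    rw [← exists_val_ne_zero_and_val_pos_iff_dvd_or_dvd hv halg hO0 hf hg' hh' hp]
    exact ⟨fun ⟨x, hvf, hvp⟩ => ⟨x, hfinite x p hp hvp, hvf, hvp⟩,
      fun ⟨x, _, hvf, hvp⟩ => ⟨x, hvf, hvp⟩⟩
  refine (lt_or_ge _ _).imp_right fun hx => ?_
  have hR := val_algebraMap_nonneg hO0 hx
  rcases val_pos_or_val_pos_of_val_ne_zero hv halg hO0 hf hg' hh' hx hvf with hvg | hvh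
  · obtain ⟨p, hp, hpg, hvp⟩ := exists_prime_dvd_of_val_pos (hv x) hR halg hg hvg
    exact ⟨p, hp.irreducible, Or.inl hpg, hvp⟩
  · obtain ⟨p, hp, hph, hvp⟩ := exists_prime_dvd_of_val_pos (hv x) hR halg hh hvh
    exact ⟨p, hp.irreducible, Or.inr hph, hvp⟩

/-- Let `f ∈ k(X)ˣ` be a nonzero function. Let `g ∈ k[t]` be
the denominator of `f` with respect to `O_0` (the minimal nonzero polynomial
with `fg ∈ O_0`, where `O_0` is the integral closure of `k[t]` in the function
field `K = k(X)`), and let `h ∈ k[t]` be a generator of the ideal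
`k[t] ∩ f g O_0`. Let `D_g` and `D_h` be the zero divisors of `g` and `h` on
`P¹`. Then `{π(x) : x ∈ Supp(div f), π(x) ≠ ∞} = Supp(D_g) ∪ Supp(D_h)`.
In particular, `div(f)` is supported on
`{x ∈ X : π(x) ∈ Supp(D_g) ∪ Supp(D_h) ∪ {∞}}`.

The closed points of `X` are abstracted as a type `Pt` carrying the normalized
valuations `v x` on `K`; the finite closed points of `P¹` are identified with
(associate classes of) irreducible polynomials `p ∈ k[t]`, a point `x` lies
over the point cut out by `p` exactly when `v x p > 0`, and `π(x) = ∞` exactly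
when `v x t < 0`. Membership of a finite point of `P¹` in `Supp(D_g)` is then
divisibility `p ∣ g`. The first asserted set equality is accordingly expressed
as an equality of sets of irreducible polynomials. -/
theorem statement6 {k K : Type*} [Field k] [Field K] [Algebra (Polynomial k) K]
    (halg : Function.Injective (algebraMap (Polynomial k) K))
    (Pt : Type*) (v : Pt → K → ℤ)
    (hv_mul : ∀ x (a b : K), a ≠ 0 → b ≠ 0 → v x (a * b) = v x a + v x b)
    (hv_add : ∀ x (a b : K), a ≠ 0 → b ≠ 0 → a + b ≠ 0 → min (v x a) (v x b) ≤ v x (a + b))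
    (hv_const : ∀ x (c : k), c ≠ 0 → v x (algebraMap (Polynomial k) K (Polynomial.C c)) = 0)
    (hv_finite : ∀ a : K, a ≠ 0 → {x | v x a ≠ 0}.Finite)
    (hO0 : ∀ a : K, a ∈ integralClosure (Polynomial k) K ↔
      ∀ x, 0 ≤ v x (algebraMap (Polynomial k) K Polynomial.X) → 0 ≤ v x a)
    (hπ_surj : ∀ p : Polynomial k, Irreducible p →
      ∃ x, 0 < v x (algebraMap (Polynomial k) K p))
    (f : K) (hf : f ≠ 0)
    (g : Polynomial k) (hg : g ≠ 0)
    (hfg : f * algebraMap (Polynomial k) K g ∈ integralClosure (Polynomial k) K)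
    (hg_min : ∀ g' : Polynomial k, g' ≠ 0 →
      f * algebraMap (Polynomial k) K g' ∈ integralClosure (Polynomial k) K → g ∣ g')
    (h : Polynomial k) (hh : h ≠ 0)
    (hh_mem : ∃ a ∈ integralClosure (Polynomial k) K,
      algebraMap (Polynomial k) K h = f * algebraMap (Polynomial k) K g * a)
    (hh_gen : ∀ h' : Polynomial k,
      (∃ a ∈ integralClosure (Polynomial k) K,
        algebraMap (Polynomial k) K h' = f * algebraMap (Polynomial k) K g * a) → h ∣ h') :
    ({p : Polynomial k | Irreducible p ∧
        ∃ x, v x f ≠ 0 ∧ 0 < v x (algebraMap (Polynomial k) K p)} =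
      {p : Polynomial k | Irreducible p ∧ p ∣ g} ∪
        {p : Polynomial k | Irreducible p ∧ p ∣ h}) ∧
      ∀ x, v x f ≠ 0 →
        v x (algebraMap (Polynomial k) K Polynomial.X) < 0 ∨
          ∃ p : Polynomial k, Irreducible p ∧ (p ∣ g ∨ p ∣ h) ∧
            0 < v x (algebraMap (Polynomial k) K p) :=
  statement6_general halg Pt v hv_mul hv_add hv_const hO0 f hf g hg hfg hg_min h hh hh_mem hh_gen
end

section
/- Let n ≥ 1 and let U ⊆ Λ ⊆ Z^n be subgroups such that the quotient Z^n / Λ has rank 1 and its torsion subgroup has finite order h. Then U = Λ if and only if the quotient Z^n / U has rank 1 and the order of its torsion subgroup is strictly less than 2h. -/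
/-!
The projection `φ : ℤⁿ/U → ℤⁿ/Λ` is surjective with kernel `Λ/U`. If both quotients have rank 1,
rank–nullity forces `Λ/U` to be torsion. A surjection with torsion kernel maps torsion onto
torsion, and its kernel lies inside the torsion, so `|T(ℤⁿ/U)| = |Λ/U| · h`. The bound `< 2h`
then leaves `|Λ/U| = 1`, i.e. `U = Λ`.
-/

universe v

namespace Submodule

open Module LinearMap

section CommRing

variable {R N P : Type*} [CommRing R] [AddCommGroup N] [Module R N] [AddCommGroup P] [Module R P]

theorem torsion_le_comap_torsion (f : N →ₗ[R] P) : torsion R N ≤ (torsion R P).comap f := by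
  rintro x ⟨a, hax⟩
  exact ⟨a, by rw [Submonoid.smul_def, ← map_smul, ← Submonoid.smul_def, hax, map_zero]⟩

theorem map_torsion_of_isTorsion_ker {f : N →ₗ[R] P} (hf : Function.Surjective f)
    (hker : IsTorsion R (ker f)) : (torsion R N).map f = torsion R P := by
  refine le_antisymm (map_le_iff_le_comap.mpr (torsion_le_comap_torsion f)) ?_
  rintro y ⟨a, hay⟩
  obtain ⟨x, rfl⟩ := hf y
  have hax : (a : R) • x ∈ ker f := by
    rw [mem_ker, map_smul]
    exact hay
  obtain ⟨b, hb⟩ := @hker ⟨_, hax⟩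
  refine ⟨x, ⟨b * a, ?_⟩, rfl⟩
  rw [Submonoid.smul_def, Submonoid.coe_mul, mul_smul]
  exact congrArg Subtype.val hb

theorem card_torsion_eq_card_ker_mul {f : N →ₗ[R] P} (hf : Function.Surjective f)
    (hker : IsTorsion R (ker f)) :
    Nat.card (torsion R N) = Nat.card (ker f) * Nat.card (torsion R P) := by
  set g := f.domRestrict (torsion R N)
  have hker_le : ker f ≤ torsion R N := fun x hx => by
    obtain ⟨a, ha⟩ := @hker ⟨x, hx⟩
    exact ⟨a, congrArg Subtype.val ha⟩
  have hker_g : Nat.card (ker g) = Nat.card (ker f) := by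
    rw [ker_domRestrict]
    exact Nat.card_congr (comapSubtypeEquivOfLe hker_le).toEquiv
  have hrange_g : range g = torsion R P := by
    rw [range_domRestrict, map_torsion_of_isTorsion_ker hf hker]
  rw [card_eq_card_quotient_mul_card (ker g), Nat.card_congr g.quotKerEquivRange.toEquiv,
    hker_g, hrange_g]

end CommRing

section Domain

variable {R : Type*} {N P : Type v} [CommRing R] [IsDomain R] [AddCommGroup N] [Module R N]
  [AddCommGroup P] [Module R P]

theorem isTorsion_ker_of_rank_eq {f : N →ₗ[R] P} (hf : Function.Surjective f)
    (hrank : Module.rank R N = Module.rank R P) (hfin : Module.rank R P < Cardinal.aleph0) :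
    IsTorsion R (ker f) := by
  have h := rank_range_add_rank_ker f
  rw [range_eq_top.mpr hf, rank_top, hrank, Cardinal.add_eq_left_iff] at h
  refine Module.rank_eq_zero_iff_isTorsion.mp (h.resolve_left fun hle => ?_)
  exact (le_max_left _ _).trans hle |>.not_gt hfin

end Domain

section Int

variable {N P : Type*} [AddCommGroup N] [AddCommGroup P]

instance finite_torsion [Module.Finite ℤ N] : Finite (torsion ℤ N) :=
  Module.finite_of_fg_torsion _ torsion_isTorsion

theorem injective_of_card_torsion_lt [Module.Finite ℤ N] {f : N →ₗ[ℤ] P}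
    (hf : Function.Surjective f) (hker : IsTorsion ℤ (ker f))
    (hlt : Nat.card (torsion ℤ N) < 2 * Nat.card (torsion ℤ P)) : Function.Injective f := by
  rw [card_torsion_eq_card_ker_mul hf hker] at hlt
  have : Finite (ker f) := Module.finite_of_fg_torsion _ hker
  have hcard : Nat.card (ker f) = 1 := by
    have := Nat.lt_of_mul_lt_mul_right hlt
    have := Nat.card_pos (α := ker f)
    omega
  have : Subsingleton (ker f) := (Nat.card_eq_one_iff_unique.mp hcard).1
  exact ker_eq_bot.mp eq_bot_of_subsingleton

end Int

theorem eq_of_injective_factor {R M : Type*} [Ring R] [AddCommGroup M] [Module R M]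
    {p p' : Submodule R M} (H : p ≤ p') (hinj : Function.Injective (factor H)) : p = p' := by
  refine le_antisymm H fun x hx => ?_
  rw [← Quotient.mk_eq_zero] at hx ⊢
  exact hinj (by rw [map_zero]; exact hx)

end Submodule

theorem statement13_general (n : ℕ) (U L : Submodule ℤ (Fin n → ℤ)) (hUL : U ≤ L)
    (h : ℕ)
    (hLrank : Module.rank ℤ ((Fin n → ℤ) ⧸ L) = 1)
    (hLtors : Nat.card (Submodule.torsion ℤ ((Fin n → ℤ) ⧸ L)) = h) :
    U = L ↔
      Module.rank ℤ ((Fin n → ℤ) ⧸ U) = 1 ∧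
        Nat.card (Submodule.torsion ℤ ((Fin n → ℤ) ⧸ U)) < 2 * h := by
  subst hLtors
  constructor
  · rintro rfl
    have := Nat.card_pos (α := Submodule.torsion ℤ ((Fin n → ℤ) ⧸ U))
    exact ⟨hLrank, by omega⟩
  · rintro ⟨hUrank, hlt⟩
    have hsurj := Submodule.factor_surjective hUL
    have hker := Submodule.isTorsion_ker_of_rank_eq hsurj (hUrank.trans hLrank.symm)
      (hLrank ▸ Cardinal.one_lt_aleph0)
    exact Submodule.eq_of_injective_factor hUL
      (Submodule.injective_of_card_torsion_lt hsurj hker hlt)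

/-- Let `n ≥ 1` and let `U ⊆ Λ ⊆ ℤⁿ` be subgroups such that
the quotient `ℤⁿ / Λ` has rank 1 and its torsion subgroup has finite order `h`.
Then `U = Λ` if and only if the quotient `ℤⁿ / U` has rank 1 and the order of
its torsion subgroup is strictly less than `2h`. -/
theorem statement13 (n : ℕ) (hn : 1 ≤ n) (U L : Submodule ℤ (Fin n → ℤ)) (hUL : U ≤ L)
    (h : ℕ)
    (hLrank : Module.rank ℤ ((Fin n → ℤ) ⧸ L) = 1)
    (hLtorsfin : (Submodule.torsion ℤ ((Fin n → ℤ) ⧸ L) : Set ((Fin n → ℤ) ⧸ L)).Finite)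
    (hLtors : Nat.card (Submodule.torsion ℤ ((Fin n → ℤ) ⧸ L)) = h) :
    U = L ↔
      Module.rank ℤ ((Fin n → ℤ) ⧸ U) = 1 ∧
        Nat.card (Submodule.torsion ℤ ((Fin n → ℤ) ⧸ U)) < 2 * h :=
  statement13_general n U L hUL h hLrank hLtors
end
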